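/- Under the hypotheses of the previous convexity estimate, if additionally λ is small enough that λ²(|A|/C + 2BM/C) < 1/C_P(Ω), where C_P(Ω) is the Poincaré constant of Ω (i.e. ∫|h|² ≤ C_P ∫|∇h|² for all h ∈ H₀¹), then E is strictly convex on X = {Q ∈ H₀¹(Ω;S₀) : ‖Q‖_{L∞} ≤ M}, and consequently E has at most one critical point in X. -/

import Mathlib

open MeasureTheory

/-- The reduced LdG bulk density `F̄_b(Q) = (A/2C)tr Q² − (B/3C)tr Q³ + (1/4)(tr Q²)²`. -/
noncomputable def Fbred (A B C : ℝ) (Q : Matrix (Fin 3) (Fin 3) ℝ) : ℝ :=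
  A / (2 * C) * (Q * Q).trace - B / (3 * C) * (Q * Q * Q).trace
    + (1 / 4) * (Q * Q).trace ^ 2

/-- `|∇Q|² = Σ_{k,i,j} |∂_k Q^{ij}|²`. -/
noncomputable def gradsq (Qf : (Fin 3 → ℝ) → Matrix (Fin 3) (Fin 3) ℝ)
    (x : Fin 3 → ℝ) : ℝ :=
  ∑ k : Fin 3, ∑ i : Fin 3, ∑ j : Fin 3,
    (fderiv ℝ (fun y => Qf y i j) x (Pi.single k 1)) ^ 2

/-- The energy `E[Q] = ∫_Ω [½|∇Q|² + λ² F̄_b(Q)] dx`. -/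
noncomputable def Eldg (Ω : Set (Fin 3 → ℝ)) (lam A B C : ℝ)
    (Qf : (Fin 3 → ℝ) → Matrix (Fin 3) (Fin 3) ℝ) : ℝ :=
  ∫ x in Ω, ((1 / 2) * gradsq Qf x + lam ^ 2 * Fbred A B C (Qf x))

/-- `Qf` is a critical point of `E` on `Ω`: the Gateaux derivative vanishes in all
admissible directions. -/
def IsCritical (𝒜 : Set ((Fin 3 → ℝ) → Matrix (Fin 3) (Fin 3) ℝ))
    (Ω : Set (Fin 3 → ℝ)) (lam A B C : ℝ)
    (Qf : (Fin 3 → ℝ) → Matrix (Fin 3) (Fin 3) ℝ) : Prop :=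
  ∀ hf ∈ 𝒜, HasDerivAt (fun t : ℝ => Eldg Ω lam A B C (fun x => Qf x + t • hf x)) 0 0

/-!
Along a line `t ↦ Q + t • h` the energy density is a quartic polynomial in `t`. Its second
difference is `|∇h|²` plus `λ²` times a bulk term which, as long as `|Q| ≤ M`, is at least
`-(|A|/C + 2BM/C) |h|²`: the cubic term `tr (Q h²)` is controlled by `M |h|²` through the
Cauchy–Schwarz inequality. The Poincaré inequality then gives
`E[Q+h] + E[Q-h] - 2 E[Q] ≥ (1 - λ²(|A|/C + 2BM/C) C_P) ∫ |∇h|² > 0`.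

If `Q₁`, `Q₂` are both critical, `p t = E[Q₁ + t (Q₂ - Q₁)]` is a quartic with nonnegative
leading coefficient and `p' 0 = p' 1 = 0`; this forces `p 0 + p 1 ≤ 2 p (1/2)`, against strict
convexity at the midpoint `(Q₁ + Q₂)/2`.
-/

lemma add_le_two_mul_of_quartic {p : ℝ → ℝ} {e₀ e₁ e₂ e₃ e₄ : ℝ}
    (hp : ∀ t, p t = e₀ + e₁ * t + e₂ * t ^ 2 + e₃ * t ^ 3 + e₄ * t ^ 4) (he₄ : 0 ≤ e₄)
    (h₀ : HasDerivAt p 0 0) (h₁ : HasDerivAt (fun s => p (1 + s)) 0 0) :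
    p 0 + p 1 ≤ 2 * p (1 / 2) := by
  have hderiv : ∀ t, HasDerivAt p (e₁ + 2 * e₂ * t + 3 * e₃ * t ^ 2 + 4 * e₄ * t ^ 3) t := by
    intro t
    rw [funext hp]
    refine ((((hasDerivAt_const t e₀).fun_add ((hasDerivAt_id' t).const_mul e₁)).fun_add
      ((hasDerivAt_pow 2 t).const_mul e₂)).fun_add ((hasDerivAt_pow 3 t).const_mul e₃)).fun_add
      ((hasDerivAt_pow 4 t).const_mul e₄) |>.congr_deriv ?_
    norm_num
    ring
  have hd₀ := (hderiv 0).unique h₀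
  have hd₁ := ((hderiv (1 + 0)).comp_const_add 1 0).unique h₁
  simp only [hp]
  norm_num at hd₀ hd₁
  -- `e₁ = 0` and `2 e₂ + 3 e₃ + 4 e₄ = 0` leave `p 0 + p 1 - 2 p (1/2) = -e₄ / 8`
  linarith

lemma integral_quartic {α : Type*} [MeasurableSpace α] {μ : Measure α} {d₀ d₁ d₂ d₃ d₄ : α → ℝ}
    (h₀ : Integrable d₀ μ) (h₁ : Integrable d₁ μ) (h₂ : Integrable d₂ μ) (h₃ : Integrable d₃ μ)
    (h₄ : Integrable d₄ μ) (t : ℝ) :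
    ∫ x, (d₀ x + t * d₁ x + t ^ 2 * d₂ x + t ^ 3 * d₃ x + t ^ 4 * d₄ x) ∂μ
      = ∫ x, d₀ x ∂μ + (∫ x, d₁ x ∂μ) * t + (∫ x, d₂ x ∂μ) * t ^ 2 + (∫ x, d₃ x ∂μ) * t ^ 3
        + (∫ x, d₄ x ∂μ) * t ^ 4 := by
  have h₀₁ : Integrable (fun x => d₀ x + t * d₁ x) μ := h₀.add (h₁.const_mul t)
  have h₀₂ : Integrable (fun x => d₀ x + t * d₁ x + t ^ 2 * d₂ x) μ :=
    h₀₁.add (h₂.const_mul (t ^ 2))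
  have h₀₃ : Integrable (fun x => d₀ x + t * d₁ x + t ^ 2 * d₂ x + t ^ 3 * d₃ x) μ :=
    h₀₂.add (h₃.const_mul (t ^ 3))
  rw [integral_add h₀₃ (h₄.const_mul _), integral_add h₀₂ (h₃.const_mul _),
    integral_add h₀₁ (h₂.const_mul _), integral_add h₀ (h₁.const_mul _)]
  simp only [integral_const_mul]
  ring

lemma Continuous.integrableOn_of_isBounded {X : Type*} [MetricSpace X] [ProperSpace X]
    [MeasurableSpace X] [OpensMeasurableSpace X] {μ : Measure X} [IsFiniteMeasureOnCompacts μ]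
    {f : X → ℝ} (hf : Continuous f) {s : Set X} (hs : Bornology.IsBounded s) :
    IntegrableOn f s μ :=
  (hf.continuousOn.integrableOn_compact hs.isCompact_closure).mono_set subset_closure

lemma continuous_of_contDiff_entries {E : Type*} [NormedAddCommGroup E] [NormedSpace ℝ E]
    {m n : Type*} {k : WithTop ℕ∞} {Q : E → Matrix m n ℝ}
    (hQ : ∀ i j, ContDiff ℝ k fun y => Q y i j) : Continuous Q :=
  continuous_pi fun i => continuous_pi fun j => (hQ i j).continuous

namespace Matrix

variable {n : Type*} [Fintype n]

lemma IsSymm.mul_self {a : Matrix n n ℝ} (ha : a.IsSymm) : (a * a).IsSymm := by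
  rw [IsSymm, transpose_mul, ha.eq]

lemma IsSymm.trace_mul_eq_sum (a : Matrix n n ℝ) {b : Matrix n n ℝ} (hb : b.IsSymm) :
    (a * b).trace = ∑ i, ∑ j, a i j * b i j := by
  simp only [trace, diag, mul_apply, hb.apply]

lemma IsSymm.trace_mul_self_eq_sum_sq {a : Matrix n n ℝ} (ha : a.IsSymm) :
    (a * a).trace = ∑ i, ∑ j, a i j ^ 2 := by
  simp only [IsSymm.trace_mul_eq_sum a ha, sq]

lemma IsSymm.trace_mul_self_nonneg {a : Matrix n n ℝ} (ha : a.IsSymm) : 0 ≤ (a * a).trace := by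
  rw [ha.trace_mul_self_eq_sum_sq]
  positivity

lemma IsSymm.eq_zero_of_trace_mul_self_eq_zero {a : Matrix n n ℝ} (ha : a.IsSymm)
    (h : (a * a).trace = 0) : a = 0 := by
  rw [← trace_conjTranspose_mul_self_eq_zero_iff, conjTranspose_eq_transpose_of_trivial, ha.eq]
  exact h

lemma IsSymm.sq_trace_mul_le {a b : Matrix n n ℝ} (ha : a.IsSymm) (hb : b.IsSymm) :
    (a * b).trace ^ 2 ≤ (a * a).trace * (b * b).trace := by
  rw [IsSymm.trace_mul_eq_sum _ hb, ha.trace_mul_self_eq_sum_sq, hb.trace_mul_self_eq_sum_sq]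
  simpa only [Fintype.sum_prod_type] using
    Finset.sum_mul_sq_le_sq_mul_sq Finset.univ (fun p : n × n => a p.1 p.2) (fun p => b p.1 p.2)

lemma IsSymm.trace_sq_mul_sq_le {h : Matrix n n ℝ} (hh : h.IsSymm) :
    (h * h * (h * h)).trace ≤ (h * h).trace ^ 2 := by
  rw [hh.mul_self.trace_mul_self_eq_sum_sq, hh.trace_mul_self_eq_sum_sq]
  calc ∑ i, ∑ j, (h * h) i j ^ 2
      ≤ ∑ i, ∑ j, (∑ k, h i k ^ 2) * (∑ k, h k j ^ 2) := by
        gcongr with i _ j _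
        rw [mul_apply]
        exact Finset.sum_mul_sq_le_sq_mul_sq _ _ _
    _ = (∑ i, ∑ j, h i j ^ 2) ^ 2 := by
        have hcol : ∀ j, ∑ k, h k j ^ 2 = ∑ k, h j k ^ 2 :=
          fun j => Finset.sum_congr rfl fun k _ => by rw [hh.apply]
        simp only [hcol, sq (∑ i, ∑ j, h i j ^ 2), Finset.sum_mul_sum]

lemma IsSymm.trace_mul_mul_self_le {Q h : Matrix n n ℝ} (hQ : Q.IsSymm) (hh : h.IsSymm)
    {M : ℝ} (hQM : √(Q * Q).trace ≤ M) :
    (Q * (h * h)).trace ≤ M * (h * h).trace :=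
  calc (Q * (h * h)).trace ≤ √((Q * Q).trace * (h * h * (h * h)).trace) :=
        (le_abs_self _).trans (Real.abs_le_sqrt (hQ.sq_trace_mul_le hh.mul_self))
    _ ≤ √((Q * Q).trace * (h * h).trace ^ 2) :=
        Real.sqrt_le_sqrt (mul_le_mul_of_nonneg_left hh.trace_sq_mul_sq_le hQ.trace_mul_self_nonneg)
    _ = √(Q * Q).trace * (h * h).trace := by
        rw [Real.sqrt_mul hQ.trace_mul_self_nonneg, Real.sqrt_sq hh.trace_mul_self_nonneg]
    _ ≤ M * (h * h).trace := mul_le_mul_of_nonneg_right hQM hh.trace_mul_self_nonneg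

lemma IsSymm.sqrt_trace_midpoint_le {a b : Matrix n n ℝ} (ha : a.IsSymm) (hb : b.IsSymm)
    {M : ℝ} (haM : √(a * a).trace ≤ M) (hbM : √(b * b).trace ≤ M) :
    √(((1 / 2 : ℝ) • (a + b)) * ((1 / 2 : ℝ) • (a + b))).trace ≤ M := by
  have hab : (a * b).trace ≤ √(a * a).trace * √(b * b).trace :=
    (le_abs_self _).trans ((Real.abs_le_sqrt (ha.sq_trace_mul_le hb)).trans_eq
      (Real.sqrt_mul ha.trace_mul_self_nonneg _))
  have hexp : (((1 / 2 : ℝ) • (a + b)) * ((1 / 2 : ℝ) • (a + b))).trace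
      = ((a * a).trace + 2 * (a * b).trace + (b * b).trace) / 4 := by
    simp only [smul_mul_assoc, Matrix.mul_smul, add_mul, mul_add, trace_smul, trace_add,
      smul_eq_mul, trace_mul_comm b a]
    ring
  rw [hexp, Real.sqrt_le_left ((Real.sqrt_nonneg _).trans haM),
    ← Real.sq_sqrt ha.trace_mul_self_nonneg, ← Real.sq_sqrt hb.trace_mul_self_nonneg]
  nlinarith [Real.sqrt_nonneg (a * a).trace, Real.sqrt_nonneg (b * b).trace]

lemma trace_add_smul_mul_self (t : ℝ) (Q h : Matrix n n ℝ) :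
    ((Q + t • h) * (Q + t • h)).trace
      = (Q * Q).trace + 2 * t * (Q * h).trace + t ^ 2 * (h * h).trace := by
  simp only [add_mul, mul_add, smul_mul_assoc, Matrix.mul_smul, trace_add, trace_smul,
    smul_eq_mul, trace_mul_comm h Q]
  ring

lemma trace_add_smul_mul_self_mul_self (t : ℝ) (Q h : Matrix n n ℝ) :
    ((Q + t • h) * (Q + t • h) * (Q + t • h)).trace
      = (Q * Q * Q).trace + 3 * t * (Q * Q * h).trace
        + 3 * t ^ 2 * (Q * (h * h)).trace + t ^ 3 * (h * h * h).trace := by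
  simp only [add_mul, mul_add, smul_mul_assoc, Matrix.mul_smul, trace_add, trace_smul,
    smul_eq_mul, ← mul_assoc]
  rw [trace_mul_cycle h Q Q, trace_mul_cycle Q h Q, trace_mul_cycle h Q h, trace_mul_cycle h h Q]
  ring

end Matrix

lemma Fbred_add_smul (A B C t : ℝ) (Q h : Matrix (Fin 3) (Fin 3) ℝ) :
    Fbred A B C (Q + t • h)
      = Fbred A B C Q
        + t * (A / C * (Q * h).trace - B / C * (Q * Q * h).trace
            + (Q * Q).trace * (Q * h).trace)
        + t ^ 2 * (A / (2 * C) * (h * h).trace - B / C * (Q * (h * h)).trace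
            + (Q * h).trace ^ 2 + (Q * Q).trace * (h * h).trace / 2)
        + t ^ 3 * (-(B / (3 * C)) * (h * h * h).trace + (Q * h).trace * (h * h).trace)
        + t ^ 4 * ((1 / 4) * (h * h).trace ^ 2) := by
  simp only [Fbred, Matrix.trace_add_smul_mul_self, Matrix.trace_add_smul_mul_self_mul_self]
  ring

lemma Fbred_add_add_Fbred_sub_ge {A B C M : ℝ} (hC : 0 < C) (hB : 0 < B)
    {Q h : Matrix (Fin 3) (Fin 3) ℝ} (hQ : Q.IsSymm) (hh : h.IsSymm)
    (hQM : √(Q * Q).trace ≤ M) :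
    2 * Fbred A B C Q - (|A| / C + 2 * B * M / C) * (h * h).trace
      ≤ Fbred A B C (Q + h) + Fbred A B C (Q - h) := by
  have hr := hh.trace_mul_self_nonneg
  have hA : 0 ≤ (A + |A|) / C * (h * h).trace :=
    mul_nonneg (div_nonneg (by linarith [neg_abs_le A]) hC.le) hr
  have hBM : 0 ≤ 2 * B / C * (M * (h * h).trace - (Q * (h * h)).trace) :=
    mul_nonneg (by positivity) (sub_nonneg.mpr (hQ.trace_mul_mul_self_le hh hQM))
  have hplus : Q + h = Q + (1 : ℝ) • h := by rw [one_smul]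
  have hminus : Q - h = Q + (-1 : ℝ) • h := by rw [neg_one_smul, sub_eq_add_neg]
  have hsum : Fbred A B C (Q + h) + Fbred A B C (Q - h)
        - (2 * Fbred A B C Q - (|A| / C + 2 * B * M / C) * (h * h).trace)
      = (A + |A|) / C * (h * h).trace
        + 2 * B / C * (M * (h * h).trace - (Q * (h * h)).trace)
        + 2 * (Q * h).trace ^ 2 + (Q * Q).trace * (h * h).trace + (h * h).trace ^ 2 / 2 := by
    rw [hplus, hminus, Fbred_add_smul, Fbred_add_smul]
    ring
  linarith [mul_nonneg hQ.trace_mul_self_nonneg hr, sq_nonneg (Q * h).trace,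
    sq_nonneg (h * h).trace]

lemma continuous_Fbred (A B C : ℝ) : Continuous (Fbred A B C) := by
  unfold Fbred
  fun_prop

noncomputable def gradInner (Q h : (Fin 3 → ℝ) → Matrix (Fin 3) (Fin 3) ℝ)
    (x : Fin 3 → ℝ) : ℝ :=
  ∑ k : Fin 3, ∑ i : Fin 3, ∑ j : Fin 3,
    fderiv ℝ (fun y => Q y i j) x (Pi.single k 1) * fderiv ℝ (fun y => h y i j) x (Pi.single k 1)

section Gradient

variable {Q h : (Fin 3 → ℝ) → Matrix (Fin 3) (Fin 3) ℝ}

lemma gradsq_add_smul {x : Fin 3 → ℝ} (hQ : ∀ i j, DifferentiableAt ℝ (fun y => Q y i j) x)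
    (hh : ∀ i j, DifferentiableAt ℝ (fun y => h y i j) x) (t : ℝ) :
    gradsq (fun y => Q y + t • h y) x
      = gradsq Q x + 2 * t * gradInner Q h x + t ^ 2 * gradsq h x := by
  have hpartial : ∀ k i j, fderiv ℝ (fun y => (Q y + t • h y) i j) x (Pi.single k 1) ^ 2
      = fderiv ℝ (fun y => Q y i j) x (Pi.single k 1) ^ 2
        + 2 * t * (fderiv ℝ (fun y => Q y i j) x (Pi.single k 1)
            * fderiv ℝ (fun y => h y i j) x (Pi.single k 1))
        + t ^ 2 * fderiv ℝ (fun y => h y i j) x (Pi.single k 1) ^ 2 := by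
    intro k i j
    change fderiv ℝ (fun y => Q y i j + t * h y i j) x (Pi.single k 1) ^ 2 = _
    rw [fderiv_fun_add (hQ i j) ((hh i j).const_mul t), fderiv_const_mul (hh i j) t]
    simp only [add_apply, smul_apply, smul_eq_mul]
    ring
  simp only [gradsq, gradInner, hpartial, Finset.sum_add_distrib, Finset.mul_sum]

lemma gradsq_add_add_gradsq_sub {x : Fin 3 → ℝ}
    (hQ : ∀ i j, DifferentiableAt ℝ (fun y => Q y i j) x)
    (hh : ∀ i j, DifferentiableAt ℝ (fun y => h y i j) x) :
    gradsq (fun y => Q y + h y) x + gradsq (fun y => Q y - h y) x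
      = 2 * gradsq Q x + 2 * gradsq h x := by
  have hplus := gradsq_add_smul hQ hh 1
  have hminus := gradsq_add_smul hQ hh (-1)
  simp only [one_smul, neg_one_smul, ← sub_eq_add_neg] at hplus hminus
  linarith

lemma continuous_gradsq (hQ : ∀ i j, ContDiff ℝ 1 fun y => Q y i j) :
    Continuous (gradsq Q) := by
  have := fun i j => (hQ i j).continuous_fderiv one_ne_zero
  unfold gradsq
  fun_prop

lemma continuous_gradInner (hQ : ∀ i j, ContDiff ℝ 1 fun y => Q y i j)
    (hh : ∀ i j, ContDiff ℝ 1 fun y => h y i j) : Continuous (gradInner Q h) := by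
  have := fun i j => (hQ i j).continuous_fderiv one_ne_zero
  have := fun i j => (hh i j).continuous_fderiv one_ne_zero
  unfold gradInner
  fun_prop

end Gradient

section Energy

variable {Ω : Set (Fin 3 → ℝ)} {lam A B C M : ℝ}
  {Q h : (Fin 3 → ℝ) → Matrix (Fin 3) (Fin 3) ℝ}

lemma integrableOn_Eldg_integrand (hΩ : Bornology.IsBounded Ω)
    (hQ : ∀ i j, ContDiff ℝ 1 fun y => Q y i j) :
    IntegrableOn (fun x => (1 / 2) * gradsq Q x + lam ^ 2 * Fbred A B C (Q x)) Ω := by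
  have := continuous_gradsq hQ
  have := (continuous_Fbred (A := A) (B := B) (C := C)).comp (continuous_of_contDiff_entries hQ)
  exact Continuous.integrableOn_of_isBounded (by fun_prop) hΩ

lemma integrableOn_trace_mul_self (hΩ : Bornology.IsBounded Ω)
    (hh : ∀ i j, ContDiff ℝ 1 fun y => h y i j) :
    IntegrableOn (fun x => (h x * h x).trace) Ω := by
  have := continuous_of_contDiff_entries hh
  exact Continuous.integrableOn_of_isBounded (by fun_prop) hΩ

lemma Eldg_integrand_add_add_sub_ge (hC : 0 < C) (hB : 0 < B) {x : Fin 3 → ℝ}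
    (hQ : ∀ i j, DifferentiableAt ℝ (fun y => Q y i j) x)
    (hh : ∀ i j, DifferentiableAt ℝ (fun y => h y i j) x) (hQs : (Q x).IsSymm)
    (hhs : (h x).IsSymm) (hQM : √(Q x * Q x).trace ≤ M) :
    2 * ((1 / 2) * gradsq Q x + lam ^ 2 * Fbred A B C (Q x))
        + (gradsq h x - lam ^ 2 * (|A| / C + 2 * B * M / C) * (h x * h x).trace)
      ≤ ((1 / 2) * gradsq (fun y => Q y + h y) x + lam ^ 2 * Fbred A B C (Q x + h x))
        + ((1 / 2) * gradsq (fun y => Q y - h y) x + lam ^ 2 * Fbred A B C (Q x - h x)) := by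
  have hgrad := gradsq_add_add_gradsq_sub hQ hh
  have hbulk := mul_le_mul_of_nonneg_left
    (Fbred_add_add_Fbred_sub_ge (A := A) hC hB hQs hhs hQM) (sq_nonneg lam)
  linarith

lemma Eldg_add_add_Eldg_sub_ge (hΩm : MeasurableSet Ω) (hΩ : Bornology.IsBounded Ω)
    (hC : 0 < C) (hB : 0 < B)
    (hQ : ∀ i j, ContDiff ℝ 1 fun y => Q y i j) (hh : ∀ i j, ContDiff ℝ 1 fun y => h y i j)
    (hQs : ∀ x, (Q x).IsSymm) (hhs : ∀ x, (h x).IsSymm)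
    (hQM : ∀ x ∈ Ω, √(Q x * Q x).trace ≤ M) :
    2 * Eldg Ω lam A B C Q + ((∫ x in Ω, gradsq h x)
        - lam ^ 2 * (|A| / C + 2 * B * M / C) * ∫ x in Ω, (h x * h x).trace)
      ≤ Eldg Ω lam A B C (fun x => Q x + h x) + Eldg Ω lam A B C (fun x => Q x - h x) := by
  have hg := (continuous_gradsq hh).integrableOn_of_isBounded hΩ (μ := volume)
  have hr := integrableOn_trace_mul_self hΩ hh
  have hdens : ∀ {f : (Fin 3 → ℝ) → Matrix (Fin 3) (Fin 3) ℝ},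
      (∀ i j, ContDiff ℝ 1 fun y => f y i j) →
      IntegrableOn (fun x => (1 / 2) * gradsq f x + lam ^ 2 * Fbred A B C (f x)) Ω :=
    fun hf => integrableOn_Eldg_integrand hΩ hf
  have hadd := hdens fun i j => (hQ i j).add (hh i j)
  have hsub := hdens fun i j => (hQ i j).sub (hh i j)
  have hlow : IntegrableOn
      (fun x => gradsq h x - lam ^ 2 * (|A| / C + 2 * B * M / C) * (h x * h x).trace) Ω :=
    hg.sub (hr.const_mul _)
  calc _ = ∫ x in Ω, (2 * ((1 / 2) * gradsq Q x + lam ^ 2 * Fbred A B C (Q x))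
          + (gradsq h x - lam ^ 2 * (|A| / C + 2 * B * M / C) * (h x * h x).trace)) := by
        rw [integral_add ((hdens hQ).const_mul 2) hlow, integral_sub hg (hr.const_mul _),
          integral_const_mul, integral_const_mul, Eldg]
    _ ≤ ∫ x in Ω, (((1 / 2) * gradsq (fun y => Q y + h y) x + lam ^ 2 * Fbred A B C (Q x + h x))
          + ((1 / 2) * gradsq (fun y => Q y - h y) x + lam ^ 2 * Fbred A B C (Q x - h x))) :=
        setIntegral_mono_on (((hdens hQ).const_mul 2).fun_add hlow) (hadd.fun_add hsub) hΩm
          fun x hx => Eldg_integrand_add_add_sub_ge hC hB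
            (fun i j => (hQ i j).differentiable one_ne_zero x)
            (fun i j => (hh i j).differentiable one_ne_zero x) (hQs x) (hhs x) (hQM x hx)
    _ = Eldg Ω lam A B C (fun x => Q x + h x) + Eldg Ω lam A B C (fun x => Q x - h x) :=
        integral_add hadd hsub

lemma integral_gradsq_pos (hΩ : Bornology.IsBounded Ω) {C_P : ℝ}
    (hh : ∀ i j, ContDiff ℝ 1 fun y => h y i j) (hhs : ∀ x, (h x).IsSymm)
    (hPoin : ∫ x in Ω, (h x * h x).trace ≤ C_P * ∫ x in Ω, gradsq h x)
    (hne : ¬ ∀ᵐ x ∂(volume.restrict Ω), h x = 0) :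
    0 < ∫ x in Ω, gradsq h x := by
  have hr : 0 ≤ fun x => (h x * h x).trace := fun x => (hhs x).trace_mul_self_nonneg
  have hG : 0 ≤ ∫ x in Ω, gradsq h x := integral_nonneg fun x => by unfold gradsq; positivity
  refine hG.lt_of_ne fun hG₀ => hne ?_
  have hR₀ : ∫ x in Ω, (h x * h x).trace = 0 :=
    le_antisymm (by simpa [← hG₀] using hPoin) (integral_nonneg hr)
  filter_upwards
    [(integral_eq_zero_iff_of_nonneg hr (integrableOn_trace_mul_self hΩ hh)).mp hR₀] with x hx
  exact (hhs x).eq_zero_of_trace_mul_self_eq_zero hx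

lemma two_mul_Eldg_lt_Eldg_add_add_Eldg_sub (hΩm : MeasurableSet Ω)
    (hΩ : Bornology.IsBounded Ω) {C_P : ℝ} (hC : 0 < C) (hB : 0 < B) (hM : 0 ≤ M)
    (hCP : 0 < C_P) (hsmall : lam ^ 2 * (|A| / C + 2 * B * M / C) < 1 / C_P)
    (hQ : ∀ i j, ContDiff ℝ 1 fun y => Q y i j) (hh : ∀ i j, ContDiff ℝ 1 fun y => h y i j)
    (hQs : ∀ x, (Q x).IsSymm) (hhs : ∀ x, (h x).IsSymm)
    (hPoin : ∫ x in Ω, (h x * h x).trace ≤ C_P * ∫ x in Ω, gradsq h x)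
    (hQM : ∀ x ∈ Ω, √(Q x * Q x).trace ≤ M)
    (hne : ¬ ∀ᵐ x ∂(volume.restrict Ω), h x = 0) :
    2 * Eldg Ω lam A B C Q
      < Eldg Ω lam A B C (fun x => Q x + h x) + Eldg Ω lam A B C (fun x => Q x - h x) := by
  have hcoef : 0 ≤ lam ^ 2 * (|A| / C + 2 * B * M / C) := by positivity
  have hsmall' : lam ^ 2 * (|A| / C + 2 * B * M / C) * C_P < 1 := (lt_div_iff₀ hCP).mp hsmall
  have hG := integral_gradsq_pos hΩ hh hhs hPoin hne
  have hsecond := Eldg_add_add_Eldg_sub_ge (lam := lam) (A := A) hΩm hΩ hC hB hQ hh hQs hhs hQM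
  linarith [mul_le_mul_of_nonneg_left hPoin hcoef, mul_pos (sub_pos.mpr hsmall') hG]

lemma exists_quartic_Eldg_add_smul (hΩ : Bornology.IsBounded Ω)
    (hQ : ∀ i j, ContDiff ℝ 1 fun y => Q y i j) (hh : ∀ i j, ContDiff ℝ 1 fun y => h y i j) :
    ∃ e₀ e₁ e₂ e₃ e₄ : ℝ, 0 ≤ e₄ ∧ ∀ t : ℝ, Eldg Ω lam A B C (fun x => Q x + t • h x)
      = e₀ + e₁ * t + e₂ * t ^ 2 + e₃ * t ^ 3 + e₄ * t ^ 4 := by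
  have := continuous_of_contDiff_entries hQ
  have := continuous_of_contDiff_entries hh
  have := continuous_gradsq hQ
  have := continuous_gradsq hh
  have := continuous_gradInner hQ hh
  have := (continuous_Fbred (A := A) (B := B) (C := C)).comp (continuous_of_contDiff_entries hQ)
  set d₀ : (Fin 3 → ℝ) → ℝ := fun x => (1 / 2) * gradsq Q x + lam ^ 2 * Fbred A B C (Q x)
  set d₁ : (Fin 3 → ℝ) → ℝ := fun x => gradInner Q h x + lam ^ 2 * (A / C * (Q x * h x).trace
    - B / C * (Q x * Q x * h x).trace + (Q x * Q x).trace * (Q x * h x).trace)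
  set d₂ : (Fin 3 → ℝ) → ℝ := fun x => (1 / 2) * gradsq h x + lam ^ 2 * (A / (2 * C) *
    (h x * h x).trace - B / C * (Q x * (h x * h x)).trace + (Q x * h x).trace ^ 2
    + (Q x * Q x).trace * (h x * h x).trace / 2)
  set d₃ : (Fin 3 → ℝ) → ℝ := fun x => lam ^ 2 * (-(B / (3 * C)) * (h x * h x * h x).trace
    + (Q x * h x).trace * (h x * h x).trace)
  set d₄ : (Fin 3 → ℝ) → ℝ := fun x => lam ^ 2 * ((1 / 4) * (h x * h x).trace ^ 2)
  have hpt : ∀ t x,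
      (1 / 2) * gradsq (fun y => Q y + t • h y) x + lam ^ 2 * Fbred A B C (Q x + t • h x)
        = d₀ x + t * d₁ x + t ^ 2 * d₂ x + t ^ 3 * d₃ x + t ^ 4 * d₄ x := by
    intro t x
    rw [gradsq_add_smul (fun i j => (hQ i j).differentiable one_ne_zero x)
      (fun i j => (hh i j).differentiable one_ne_zero x), Fbred_add_smul]
    ring
  have hint : ∀ d : (Fin 3 → ℝ) → ℝ, Continuous d → Integrable d (volume.restrict Ω) :=
    fun d hd => hd.integrableOn_of_isBounded hΩ
  refine ⟨∫ x in Ω, d₀ x, ∫ x in Ω, d₁ x, ∫ x in Ω, d₂ x, ∫ x in Ω, d₃ x, ∫ x in Ω, d₄ x,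
    integral_nonneg fun x => by positivity, fun t => ?_⟩
  simp only [Eldg, hpt]
  exact integral_quartic (hint _ (by fun_prop)) (hint _ (by fun_prop)) (hint _ (by fun_prop))
    (hint _ (by fun_prop)) (hint _ (by fun_prop)) t

lemma Eldg_add_le_two_mul_Eldg_midpoint (hΩ : Bornology.IsBounded Ω)
    {Q₁ Q₂ : (Fin 3 → ℝ) → Matrix (Fin 3) (Fin 3) ℝ}
    (hQ₁ : ∀ i j, ContDiff ℝ 1 fun y => Q₁ y i j) (hQ₂ : ∀ i j, ContDiff ℝ 1 fun y => Q₂ y i j)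
    (hcrit₁ : HasDerivAt (fun t : ℝ => Eldg Ω lam A B C (fun x => Q₁ x + t • (Q₂ - Q₁) x)) 0 0)
    (hcrit₂ : HasDerivAt (fun t : ℝ => Eldg Ω lam A B C (fun x => Q₂ x + t • (Q₂ - Q₁) x)) 0 0) :
    Eldg Ω lam A B C Q₁ + Eldg Ω lam A B C Q₂
      ≤ 2 * Eldg Ω lam A B C ((1 / 2 : ℝ) • (Q₁ + Q₂)) := by
  obtain ⟨e₀, e₁, e₂, e₃, e₄, he₄, hp⟩ := exists_quartic_Eldg_add_smul (lam := lam) (A := A)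
    (B := B) (C := C) hΩ hQ₁ fun i j => (hQ₂ i j).sub (hQ₁ i j)
  set p : ℝ → ℝ := fun t => Eldg Ω lam A B C (fun x => Q₁ x + t • (Q₂ - Q₁) x)
  have hEp : ∀ t f, (∀ x, f x = Q₁ x + t • (Q₂ - Q₁) x) → Eldg Ω lam A B C f = p t :=
    fun t f hf => congrArg _ (funext hf)
  have hcrit₂' : HasDerivAt (fun s => p (1 + s)) 0 0 := by
    have hshift :
        (fun s => p (1 + s)) = fun s => Eldg Ω lam A B C (fun x => Q₂ x + s • (Q₂ - Q₁) x) :=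
      funext fun s => (hEp _ _ fun x => by simp only [Pi.sub_apply]; module).symm
    rw [hshift]
    exact hcrit₂
  rw [hEp 0 Q₁ fun x => by simp, hEp 1 Q₂ fun x => by simp,
    hEp (1 / 2) _ fun x => by simp only [Pi.smul_apply, Pi.add_apply, Pi.sub_apply]; module]
  exact add_le_two_mul_of_quartic hp he₄ hcrit₁ hcrit₂'

end Energy

theorem stmt7_general (Ω : Set (Fin 3 → ℝ)) (hΩm : MeasurableSet Ω)
    (hΩb : Bornology.IsBounded Ω)
    (A B C lam M C_P : ℝ) (hC : 0 < C) (hB : 0 < B) (hM : 0 < M)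
    (hCP : 0 < C_P)
    (𝒜 : Set ((Fin 3 → ℝ) → Matrix (Fin 3) (Fin 3) ℝ))
    (h𝒜reg : ∀ f ∈ 𝒜, (∀ i j, ContDiff ℝ 1 fun y => f y i j) ∧
      ∀ x, (f x).IsSymm ∧ (f x).trace = 0)
    (h𝒜sub : ∀ f ∈ 𝒜, ∀ g ∈ 𝒜, (f - g) ∈ 𝒜)
    (h𝒜add : ∀ f ∈ 𝒜, ∀ g ∈ 𝒜, (f + g) ∈ 𝒜)
    (h𝒜smul : ∀ (c : ℝ), ∀ f ∈ 𝒜, (c • f) ∈ 𝒜)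
    (hPoin : ∀ f ∈ 𝒜, ∫ x in Ω, (f x * f x).trace ≤ C_P * ∫ x in Ω, gradsq f x)
    (hsmall : lam ^ 2 * (|A| / C + 2 * B * M / C) < 1 / C_P) :
    (∀ Qf ∈ 𝒜, ∀ hf ∈ 𝒜,
        (∀ x ∈ Ω, Real.sqrt ((Qf x * Qf x).trace) ≤ M) →
        (∀ x ∈ Ω, Real.sqrt (((Qf x + hf x) * (Qf x + hf x)).trace) ≤ M) →
        (∀ x ∈ Ω, Real.sqrt (((Qf x - hf x) * (Qf x - hf x)).trace) ≤ M) →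
        ¬ (∀ᵐ x ∂(volume.restrict Ω), hf x = 0) →
        2 * Eldg Ω lam A B C Qf
          < Eldg Ω lam A B C (fun x => Qf x + hf x)
              + Eldg Ω lam A B C (fun x => Qf x - hf x)) ∧
    (∀ Q₁ ∈ 𝒜, ∀ Q₂ ∈ 𝒜,
        (∀ x ∈ Ω, Real.sqrt ((Q₁ x * Q₁ x).trace) ≤ M) →
        (∀ x ∈ Ω, Real.sqrt ((Q₂ x * Q₂ x).trace) ≤ M) →
        IsCritical 𝒜 Ω lam A B C Q₁ → IsCritical 𝒜 Ω lam A B C Q₂ →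
        ∀ᵐ x ∂(volume.restrict Ω), Q₁ x = Q₂ x) := by
  have hstrict := fun Qf (hQf : Qf ∈ 𝒜) hf (hhf : hf ∈ 𝒜) =>
    two_mul_Eldg_lt_Eldg_add_add_Eldg_sub hΩm hΩb hC hB hM.le hCP hsmall (h𝒜reg Qf hQf).1
      (h𝒜reg hf hhf).1 (fun x => ((h𝒜reg Qf hQf).2 x).1) (fun x => ((h𝒜reg hf hhf).2 x).1)
      (hPoin hf hhf)
  refine ⟨fun Qf hQf hf hhf hQfM _ _ => hstrict Qf hQf hf hhf hQfM,
    fun Q₁ hQ₁ Q₂ hQ₂ hQ₁M hQ₂M hcrit₁ hcrit₂ => ?_⟩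
  by_contra hne
  have hh : Q₂ - Q₁ ∈ 𝒜 := h𝒜sub Q₂ hQ₂ Q₁ hQ₁
  have hle := Eldg_add_le_two_mul_Eldg_midpoint hΩb (h𝒜reg Q₁ hQ₁).1 (h𝒜reg Q₂ hQ₂).1
    (hcrit₁ _ hh) (hcrit₂ _ hh)
  have hlt := hstrict _ (h𝒜smul _ _ (h𝒜add _ hQ₁ _ hQ₂)) _ (h𝒜smul (1 / 2) _ hh)
    (fun x hx => Matrix.IsSymm.sqrt_trace_midpoint_le ((h𝒜reg Q₁ hQ₁).2 x).1
      ((h𝒜reg Q₂ hQ₂).2 x).1 (hQ₁M x hx) (hQ₂M x hx))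
    fun hd => hne <| by
      filter_upwards [hd] with x hx
      simpa [sub_eq_zero, eq_comm] using hx
  have hplus : (fun x => ((1 / 2 : ℝ) • (Q₁ + Q₂)) x + ((1 / 2 : ℝ) • (Q₂ - Q₁)) x) = Q₂ :=
    funext fun x => by simp only [Pi.smul_apply, Pi.add_apply, Pi.sub_apply]; module
  have hminus : (fun x => ((1 / 2 : ℝ) • (Q₁ + Q₂)) x - ((1 / 2 : ℝ) • (Q₂ - Q₁)) x) = Q₁ :=
    funext fun x => by simp only [Pi.smul_apply, Pi.add_apply, Pi.sub_apply]; module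
  rw [hplus, hminus] at hlt
  linarith

/-- If `λ²(|A|/C + 2BM/C) < 1/C_P(Ω)` (Poincaré constant), then `E` is strictly convex
on `X = {Q : ‖Q‖_{L∞} ≤ M}` within an H₀¹-type admissible class `𝒜`, and consequently
`E` has at most one critical point in `X ∩ 𝒜`. -/
theorem stmt7 (Ω : Set (Fin 3 → ℝ)) (hΩm : MeasurableSet Ω)
    (hΩb : Bornology.IsBounded Ω)
    (A B C lam M C_P : ℝ) (hC : 0 < C) (hB : 0 < B) (hlam : 0 < lam) (hM : 0 < M)
    (hCP : 0 < C_P)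
    (𝒜 : Set ((Fin 3 → ℝ) → Matrix (Fin 3) (Fin 3) ℝ))
    (h𝒜reg : ∀ f ∈ 𝒜, (∀ i j, ContDiff ℝ 1 fun y => f y i j) ∧
      ∀ x, (f x).IsSymm ∧ (f x).trace = 0)
    (h𝒜sub : ∀ f ∈ 𝒜, ∀ g ∈ 𝒜, (f - g) ∈ 𝒜)
    (h𝒜add : ∀ f ∈ 𝒜, ∀ g ∈ 𝒜, (f + g) ∈ 𝒜)
    (h𝒜smul : ∀ (c : ℝ), ∀ f ∈ 𝒜, (c • f) ∈ 𝒜)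
    (hPoin : ∀ f ∈ 𝒜, ∫ x in Ω, (f x * f x).trace ≤ C_P * ∫ x in Ω, gradsq f x)
    (hsmall : lam ^ 2 * (|A| / C + 2 * B * M / C) < 1 / C_P) :
    (∀ Qf ∈ 𝒜, ∀ hf ∈ 𝒜,
        (∀ x ∈ Ω, Real.sqrt ((Qf x * Qf x).trace) ≤ M) →
        (∀ x ∈ Ω, Real.sqrt (((Qf x + hf x) * (Qf x + hf x)).trace) ≤ M) →
        (∀ x ∈ Ω, Real.sqrt (((Qf x - hf x) * (Qf x - hf x)).trace) ≤ M) →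
        ¬ (∀ᵐ x ∂(volume.restrict Ω), hf x = 0) →
        2 * Eldg Ω lam A B C Qf
          < Eldg Ω lam A B C (fun x => Qf x + hf x)
              + Eldg Ω lam A B C (fun x => Qf x - hf x)) ∧
    (∀ Q₁ ∈ 𝒜, ∀ Q₂ ∈ 𝒜,
        (∀ x ∈ Ω, Real.sqrt ((Q₁ x * Q₁ x).trace) ≤ M) →
        (∀ x ∈ Ω, Real.sqrt ((Q₂ x * Q₂ x).trace) ≤ M) →
        IsCritical 𝒜 Ω lam A B C Q₁ → IsCritical 𝒜 Ω lam A B C Q₂ →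
        ∀ᵐ x ∂(volume.restrict Ω), Q₁ x = Q₂ x) :=
  stmt7_general Ω hΩm hΩb A B C lam M C_P hC hB hM hCP 𝒜 h𝒜reg h𝒜sub h𝒜add h𝒜smul hPoin hsmall
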